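/- arXiv:1602.03226 — 4 statements merged into one kernel-verified Lean document; each statement's English description precedes it below -/
import Mathlib

section
/- Let R be a commutative noetherian local ring with maximal ideal m and let L be a free R-module. Then the m-adic completion L̂ is a flat R-module. -/
/-!
Take `L = ι →₀ R` and test flatness with the equational criterion. If `k₁, …, kₛ` generate the
kernel of `f : Rˡ → R`, a relation `∑ fᵢ xᵢ = 0` in `L̂` is trivial as soon as the completion of
the exact sequence `(ι →₀ Rˢ) → (ι →₀ Rˡ) → (ι →₀ R)` is exact. By Artin–Rees both maps of
`Rˢ → Rˡ → R` are strict for the `I`-adic filtrations, strictness passes coordinatewise to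
`ι →₀ -` with the same constants, and a strict exact sequence stays exact after completion:
approximate lifts at each level are corrected, by elements of ever higher filtration, into a
Cauchy sequence.
-/

open Submodule

section AdicStrict

variable {R : Type*} [CommRing R] (I : Ideal R) {M N : Type*}
  [AddCommGroup M] [Module R M] [AddCommGroup N] [Module R N]

/-- `f` is strict for the `I`-adic filtrations, up to a shift `c`; the reverse inclusion
`(I ^ n • ⊤).map f ≤ range f ⊓ I ^ n • ⊤` always holds. -/
def LinearMap.IsAdicStrict (f : M →ₗ[R] N) : Prop :=
  ∃ c, ∀ n, LinearMap.range f ⊓ I ^ (n + c) • ⊤ ≤ (I ^ n • ⊤ : Submodule R M).map f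

theorem LinearMap.isAdicStrict_of_finite [IsNoetherianRing R] [Module.Finite R N]
    (f : M →ₗ[R] N) : f.IsAdicStrict I := by
  obtain ⟨c, hc⟩ := Ideal.exists_pow_inf_eq_pow_smul I (LinearMap.range f)
  refine ⟨c, fun n => ?_⟩
  rw [inf_comm, hc (n + c) (Nat.le_add_left c n), Nat.add_sub_cancel, map_smul'',
    Submodule.map_top]
  exact smul_mono_right _ inf_le_right

end AdicStrict

namespace Finsupp

variable {R : Type*} [CommRing R] {ι N P : Type*}
  [AddCommGroup N] [Module R N] [AddCommGroup P] [Module R P]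

theorem mem_ideal_smul_top_iff {J : Ideal R} {z : ι →₀ N} :
    z ∈ J • (⊤ : Submodule R (ι →₀ N)) ↔ ∀ α, z α ∈ J • (⊤ : Submodule R N) := by
  refine ⟨fun hz α => smul_top_le_comap_smul_top J (lapply α) hz, fun hz => ?_⟩
  rw [← z.sum_single]
  exact sum_mem fun α _ => smul_top_le_comap_smul_top J (lsingle α) (hz α)

theorem exists_mapRange_linearMap_eq (φ : N →ₗ[R] P) (S : Submodule R N) {z : ι →₀ P}
    (hz : ∀ α, z α ∈ S.map φ) :
    ∃ w : ι →₀ N, (∀ α, w α ∈ S) ∧ mapRange.linearMap φ w = z := by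
  classical
  choose g hgS hgφ using fun p : S.map φ => p.2
  let w : ι →₀ N := onFinset z.support
    (fun α => if h : z α = 0 then 0 else g ⟨z α, hz α⟩) fun α hα => by
      simpa using fun h : z α = 0 => hα (dif_pos h)
  refine ⟨w, fun α => ?_, ext fun α => ?_⟩
  · by_cases h : z α = 0
    · simp [w, h]
    · simpa [w, h] using hgS ⟨z α, hz α⟩
  · by_cases h : z α = 0 <;> simp [w, h, hgφ]

end Finsupp

section MapRange

open Finsupp

variable {R : Type*} [CommRing R] {ι M N P : Type*} [AddCommGroup M] [Module R M]
  [AddCommGroup N] [Module R N] [AddCommGroup P] [Module R P]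

theorem LinearMap.IsAdicStrict.mapRange {I : Ideal R} {f : M →ₗ[R] N} (hf : f.IsAdicStrict I) :
    (mapRange.linearMap f : (ι →₀ M) →ₗ[R] ι →₀ N).IsAdicStrict I := by
  obtain ⟨c, hc⟩ := hf
  refine ⟨c, fun n z ⟨⟨w, hw⟩, hz⟩ => ?_⟩
  have hzα (α : ι) : z α ∈ (I ^ n • ⊤ : Submodule R M).map f :=
    hc n ⟨⟨w α, by rw [← hw]; rfl⟩, mem_ideal_smul_top_iff.mp hz α⟩
  obtain ⟨w', hw'I, hw'⟩ := exists_mapRange_linearMap_eq f _ hzα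
  exact ⟨w', mem_ideal_smul_top_iff.mpr hw'I, hw'⟩

theorem Function.Exact.mapRange {f : M →ₗ[R] N} {g : N →ₗ[R] P} (h : Function.Exact f g) :
    Function.Exact (mapRange.linearMap f : (ι →₀ M) →ₗ[R] ι →₀ N) (mapRange.linearMap g) := by
  intro z
  constructor
  · intro hz
    have hzα (α : ι) : z α ∈ (⊤ : Submodule R M).map f := by
      rw [Submodule.map_top]
      exact (h (z α)).mp (by simpa using DFunLike.congr_fun hz α)
    obtain ⟨w, -, hw⟩ := exists_mapRange_linearMap_eq f ⊤ hzα
    exact ⟨w, hw⟩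
  · rintro ⟨w, rfl⟩
    ext α
    simp [h.apply_apply_eq_zero]

end MapRange

namespace AdicCompletion

variable {R : Type*} [CommRing R] {I : Ideal R} {M N P : Type*} [AddCommGroup M] [Module R M]
  [AddCommGroup N] [Module R N] [AddCommGroup P] [Module R P]

theorem exists_smodEq_of_map_eq_zero {f : M →ₗ[R] N} {g : N →ₗ[R] P}
    (hfg : Function.Exact f g) (hg : g.IsAdicStrict I) {b : AdicCauchySequence I N}
    (hb : map I g (mk I N b) = 0) (n : ℕ) :
    ∃ a, f a ≡ b n [SMOD (I ^ n • ⊤ : Submodule R N)] := by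
  obtain ⟨c, hc⟩ := hg
  have hgb : g (b (n + c)) ∈ (I ^ (n + c) • ⊤ : Submodule R P) := by
    rw [← Submodule.Quotient.mk_eq_zero]
    simpa using congr_arg (·.val (n + c)) hb
  obtain ⟨e, he, hge⟩ := hc n ⟨⟨b (n + c), rfl⟩, hgb⟩
  obtain ⟨a, ha⟩ := (hfg (b (n + c) - e)).mp (by rw [map_sub, hge, sub_self])
  refine ⟨a, ?_⟩
  rw [ha]
  calc b (n + c) - e ≡ b (n + c) [SMOD (I ^ n • ⊤ : Submodule R N)] :=
        SModEq.sub_mem.mpr (by simpa using he)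
    _ ≡ b n [SMOD (I ^ n • ⊤ : Submodule R N)] := (b.property (Nat.le_add_right n c)).symm

theorem exists_map_eq_mk_of_forall_exists_smodEq {f : M →ₗ[R] N} (hf : f.IsAdicStrict I)
    {b : AdicCauchySequence I N} (hb : ∀ n, ∃ a, f a ≡ b n [SMOD (I ^ n • ⊤ : Submodule R N)]) :
    ∃ y, map I f y = mk I N b := by
  obtain ⟨c, hc⟩ := hf
  choose a ha using fun n => hb (n + c)
  have hstep (n : ℕ) : f (a (n + 1)) - f (a n) ∈ LinearMap.range f ⊓ I ^ (n + c) • ⊤ := by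
    refine ⟨⟨a (n + 1) - a n, map_sub f _ _⟩, SModEq.sub_mem.mp ?_⟩
    calc f (a (n + 1)) ≡ b (n + 1 + c) [SMOD (I ^ (n + c) • ⊤ : Submodule R N)] :=
          (ha (n + 1)).mono (pow_smul_top_le I N (by omega))
      _ ≡ b (n + c) [SMOD (I ^ (n + c) • ⊤ : Submodule R N)] := (b.property (by omega)).symm
      _ ≡ f (a n) [SMOD (I ^ (n + c) • ⊤ : Submodule R N)] := (ha n).symm
  choose d hdI hdf using fun n => hc n (hstep n)
  -- `a` need not be Cauchy; the corrections `d n ∈ I ^ n • ⊤` make it so without changing `f`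
  let u (n : ℕ) : M := a 0 + ∑ m ∈ Finset.range n, d m
  have hfu (n : ℕ) : f (u n) = f (a n) := by
    simp only [u, map_add, map_sum, hdf, Finset.sum_range_sub (fun m => f (a m))]
    abel
  have hu (n : ℕ) : u n ≡ u (n + 1) [SMOD (I ^ n • ⊤ : Submodule R M)] := by
    rw [SModEq.sub_mem]
    simpa [u, Finset.sum_range_succ] using neg_mem (hdI n)
  refine ⟨mk I M (AdicCauchySequence.mk I M u hu), ext fun n => ?_⟩
  simp only [map_mk, mk_apply_coe, AdicCauchySequence.map_apply_coe, AdicCauchySequence.mk_coe,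
    mkQ_apply, hfu]
  exact ((ha n).mono (pow_smul_top_le I N (by omega))).trans (b.property (by omega)).symm

theorem map_exact_of_isAdicStrict {f : M →ₗ[R] N} {g : N →ₗ[R] P} (hfg : Function.Exact f g)
    (hf : f.IsAdicStrict I) (hg : g.IsAdicStrict I) :
    Function.Exact (map I f) (map I g) := by
  refine LinearMap.exact_of_comp_eq_zero_of_ker_le_range ?_ fun y hy => ?_
  · rw [map_comp, hfg.linearMap_comp_eq_zero, map_zero]
  · induction y using induction_on with
    | h b =>
      exact exists_map_eq_mk_of_forall_exists_smodEq hf (exists_smodEq_of_map_eq_zero hfg hg hy)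

variable (I M N) in
noncomputable def mapₗ :
    (M →ₗ[R] N) →ₗ[R] AdicCompletion I M →ₗ[AdicCompletion I R] AdicCompletion I N where
  toFun := map I
  map_add' f g := by ext a n; simp
  map_smul' r f := by ext a n; simp [val_smul_apply]

end AdicCompletion

section Coordinates

open AdicCompletion Finsupp

variable {R : Type*} [CommRing R] (I : Ideal R) {ι σ : Type*} [Fintype σ] [DecidableEq σ]

theorem AdicCompletion.map_mapRange_eq_sum (φ : (σ → R) →ₗ[R] R)
    (X : AdicCompletion I (ι →₀ σ → R)) :
    map I (mapRange.linearMap φ) X =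
      ∑ i, φ (Pi.single i 1) • map I (mapRange.linearMap (LinearMap.proj i)) X := by
  have hφ : (mapRange.linearMap φ : (ι →₀ σ → R) →ₗ[R] ι →₀ R) =
      ∑ i, φ (Pi.single i 1) • mapRange.linearMap (LinearMap.proj i) := by
    ext α v β
    by_cases h : α = β <;> simp [h, Pi.single_apply]
  rw [hφ]
  change mapₗ I _ _ _ X = _
  simp only [map_sum, map_smul, LinearMap.sum_apply, LinearMap.smul_apply]
  rfl

theorem AdicCompletion.map_mapRange_proj_sum (x : σ → AdicCompletion I (ι →₀ R)) (i : σ) :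
    map I (mapRange.linearMap (LinearMap.proj i))
      (∑ j, map I (mapRange.linearMap (LinearMap.single R (fun _ => R) j)) (x j)) = x i := by
  rw [map_sum, Finset.sum_eq_single i (fun j _ hji => ?_) (by simp), map_comp_apply,
    ← mapRange.linearMap_comp, LinearMap.proj_comp_single_same, mapRange.linearMap_id, map_id]
  · rfl
  · rw [map_comp_apply, ← mapRange.linearMap_comp,
      LinearMap.proj_comp_single_ne (R := R) (φ := fun _ => R) i j hji.symm,
      show (mapRange.linearMap 0 : (ι →₀ R) →ₗ[R] ι →₀ R) = 0 by ext; simp, map_zero]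
    rfl

end Coordinates

open AdicCompletion Finsupp in
theorem AdicCompletion.flat_finsupp {R : Type*} [CommRing R] [IsNoetherianRing R] (I : Ideal R)
    (ι : Type*) : Module.Flat R (AdicCompletion I (ι →₀ R)) := by
  refine Module.Flat.of_forall_isTrivialRelation fun {l f x} hfx => ?_
  let π := Fintype.linearCombination R f
  obtain ⟨s, k, hk⟩ := fg_iff_exists_fin_generating_family.mp
    (IsNoetherian.noetherian (LinearMap.ker π))
  let κ := Fintype.linearCombination R k
  have hexact : Function.Exact κ π :=
    LinearMap.exact_iff.mpr (by rw [Fintype.range_linearCombination, hk])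
  have hexact' : Function.Exact (map I (mapRange.linearMap κ : (ι →₀ _) →ₗ[R] _))
      (map I (mapRange.linearMap π)) :=
    map_exact_of_isAdicStrict hexact.mapRange (κ.isAdicStrict_of_finite I).mapRange
      (π.isAdicStrict_of_finite I).mapRange
  let X := ∑ i, map I (mapRange.linearMap (LinearMap.single R (fun _ => R) i)) (x i)
  have hX (i : Fin l) : map I (mapRange.linearMap (LinearMap.proj i)) X = x i :=
    map_mapRange_proj_sum I x i
  obtain ⟨Y, hY⟩ := (hexact' X).mp (by
    rw [map_mapRange_eq_sum]
    simpa [hX, π] using hfx)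
  refine ⟨s, fun i j => k j i, fun j => map I (mapRange.linearMap (LinearMap.proj j)) Y,
    fun i => ?_, fun j => ?_⟩
  · rw [← hX i, ← hY, map_comp_apply, ← mapRange.linearMap_comp, map_mapRange_eq_sum]
    simp [κ]
  · have hkj : π (k j) = 0 := LinearMap.mem_ker.mp (hk ▸ subset_span ⟨j, rfl⟩)
    simpa [π, Fintype.linearCombination_apply, mul_comm] using hkj

/-- Over a commutative noetherian local ring `(R, 𝔪)`, the `𝔪`-adic
completion `L̂` of a free `R`-module `L` is flat over `R`. -/
theorem adicCompletion_of_free_flat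
    {R : Type*} [CommRing R] [IsNoetherianRing R] [IsLocalRing R]
    (L : Type*) [AddCommGroup L] [Module R L] [Module.Free R L] :
    Module.Flat R (AdicCompletion (IsLocalRing.maximalIdeal R) L) := by
  have := AdicCompletion.flat_finsupp (IsLocalRing.maximalIdeal R)
    (Module.Free.ChooseBasisIndex R L)
  exact Module.Flat.of_linearEquiv
    ((AdicCompletion.congr _ (Module.Free.chooseBasis R L).repr).restrictScalars R)
end

section
/- Let R be a commutative noetherian local ring with maximal ideal m, let L be a free R-module, and set L' = L̂/L where L̂ is the m-adic completion. Then the natural map L/mL → L̂/mL̂ is an isomorphism; consequently L' ⊗_R (R/m) = 0. -/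
/-!
Since `𝔪` is finitely generated, the evaluation map `L̂ → L / 𝔪L` is surjective with kernel
exactly `𝔪L̂`; inverting it gives `L / 𝔪L ≃ L̂ / 𝔪L̂`. Its surjectivity says `L̂ = L + 𝔪L̂`, so
`L' = 𝔪L'`, and `L' ⊗ R/𝔪 ≃ L' / 𝔪L'` vanishes.
-/

open Submodule

namespace AdicCompletion

variable {R : Type*} [CommRing R] {I : Ideal R} {M : Type*} [AddCommGroup M] [Module R M]

noncomputable def powSMulTopQuotEquiv (hI : I.FG) (n : ℕ) :
    (M ⧸ (I ^ n • ⊤ : Submodule R M)) ≃ₗ[R]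
      AdicCompletion I M ⧸ (I ^ n • ⊤ : Submodule R (AdicCompletion I M)) :=
  ((quotEquivOfEq _ _ (pow_smul_top_eq_ker_eval hI)).trans
    ((eval I M n).quotKerEquivOfSurjective (eval_surjective I M n))).symm

theorem powSMulTopQuotEquiv_mk (hI : I.FG) (n : ℕ) (x : M) :
    powSMulTopQuotEquiv hI n (Submodule.Quotient.mk x) = Submodule.Quotient.mk (of I M x) := by
  rw [powSMulTopQuotEquiv, LinearEquiv.symm_apply_eq]
  rfl

theorem range_of_sup_pow_smul_top_eq_top (hI : I.FG) (n : ℕ) :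
    LinearMap.range (of I M) ⊔ I ^ n • ⊤ = ⊤ := by
  refine eq_top_iff.mpr fun x _ => ?_
  obtain ⟨y, hy⟩ := (powSMulTopQuotEquiv hI n).surjective (Submodule.Quotient.mk x)
  obtain ⟨y, rfl⟩ := Submodule.Quotient.mk_surjective _ y
  rw [powSMulTopQuotEquiv_mk, Submodule.Quotient.eq] at hy
  exact mem_sup.mpr ⟨of I M y, LinearMap.mem_range_self _ y, x - of I M y,
    sub_mem_comm_iff.mp hy, add_sub_cancel _ _⟩

end AdicCompletion

theorem Submodule.smul_top_quotient_eq_top_of_sup_eq_top {R M : Type*} [CommRing R]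
    [AddCommGroup M] [Module R M] {I : Ideal R} {N : Submodule R M} (h : N ⊔ I • ⊤ = ⊤) :
    (I • ⊤ : Submodule R (M ⧸ N)) = ⊤ :=
  calc I • ⊤ = I • map N.mkQ ⊤ := by rw [map_top, range_mkQ]
    _ = map N.mkQ (N ⊔ I • ⊤) := by rw [← map_smul'', map_sup, mkQ_map_self, bot_sup_eq]
    _ = ⊤ := by rw [h, map_top, range_mkQ]

theorem quotient_map_iso_and_tensor_residue_zero_general
    {R : Type u} [CommRing R] [IsNoetherianRing R] [IsLocalRing R]
    (L : Type u) [AddCommGroup L] [Module R L] :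
    (∃ e : (L ⧸ (IsLocalRing.maximalIdeal R • ⊤ : Submodule R L)) ≃ₗ[R]
        (AdicCompletion (IsLocalRing.maximalIdeal R) L ⧸
          (IsLocalRing.maximalIdeal R • ⊤ :
            Submodule R (AdicCompletion (IsLocalRing.maximalIdeal R) L))),
      ∀ x : L, e (Submodule.Quotient.mk x) =
        Submodule.Quotient.mk (AdicCompletion.of (IsLocalRing.maximalIdeal R) L x)) ∧
    Subsingleton
      (TensorProduct R
        (AdicCompletion (IsLocalRing.maximalIdeal R) L ⧸
          LinearMap.range (AdicCompletion.of (IsLocalRing.maximalIdeal R) L))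
        (R ⧸ IsLocalRing.maximalIdeal R)) := by
  have hI := (IsLocalRing.maximalIdeal R).fg_of_isNoetherianRing
  refine ⟨⟨(quotEquivOfEq _ _ (by rw [pow_one])).trans
    ((AdicCompletion.powSMulTopQuotEquiv hI 1).trans (quotEquivOfEq _ _ (by rw [pow_one]))),
    fun x => by simp [AdicCompletion.powSMulTopQuotEquiv_mk]⟩, ?_⟩
  have hsup := AdicCompletion.range_of_sup_pow_smul_top_eq_top (M := L) hI 1
  rw [pow_one] at hsup
  have hquot :=
    Submodule.Quotient.subsingleton_iff.mpr (smul_top_quotient_eq_top_of_sup_eq_top hsup)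
  exact (TensorProduct.tensorQuotEquivQuotSMul _ _).toEquiv.subsingleton

/-- Over a commutative noetherian local ring `(R, 𝔪)` with free module `L`,
the natural map `L/𝔪L → L̂/𝔪L̂` is an isomorphism; consequently, with `L' = L̂/L`, one has
`L' ⊗_R (R/𝔪) = 0`. -/
theorem quotient_map_iso_and_tensor_residue_zero
    {R : Type u} [CommRing R] [IsNoetherianRing R] [IsLocalRing R]
    (L : Type u) [AddCommGroup L] [Module R L] [Module.Free R L] :
    (∃ e : (L ⧸ (IsLocalRing.maximalIdeal R • ⊤ : Submodule R L)) ≃ₗ[R]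
        (AdicCompletion (IsLocalRing.maximalIdeal R) L ⧸
          (IsLocalRing.maximalIdeal R • ⊤ :
            Submodule R (AdicCompletion (IsLocalRing.maximalIdeal R) L))),
      ∀ x : L, e (Submodule.Quotient.mk x) =
        Submodule.Quotient.mk (AdicCompletion.of (IsLocalRing.maximalIdeal R) L x)) ∧
    Subsingleton
      (TensorProduct R
        (AdicCompletion (IsLocalRing.maximalIdeal R) L ⧸
          LinearMap.range (AdicCompletion.of (IsLocalRing.maximalIdeal R) L))
        (R ⧸ IsLocalRing.maximalIdeal R)) :=
  quotient_map_iso_and_tensor_residue_zero_general L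
end

section
/- Let R be a commutative noetherian ring and a an ideal generated by n elements. Then for every R-module M and every i > n, the i-th left derived local homology module H_i(LΛ^a(M)) vanishes. -/
open CategoryTheory

private lemma reduceModIdeal_add {R : Type u} [CommRing R] (J : Ideal R)
    {M N : Type u} [AddCommGroup M] [Module R M] [AddCommGroup N] [Module R N]
    (f g : M →ₗ[R] N) :
    (f + g).reduceModIdeal J = f.reduceModIdeal J + g.reduceModIdeal J := by
  refine LinearMap.ext fun z => ?_
  obtain ⟨y, rfl⟩ := Submodule.Quotient.mk_surjective _ z
  simp [LinearMap.reduceModIdeal_apply]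

/-- The `a`-adic completion functor `Λ^a` on the category of `R`-modules. -/
noncomputable def adicCompletionFunctor (R : Type u) [CommRing R] (I : Ideal R) :
    ModuleCat.{u} R ⥤ ModuleCat.{u} R where
  obj M := ModuleCat.of R (AdicCompletion I M)
  map {M N} f := ModuleCat.ofHom ((AdicCompletion.map I f.hom).restrictScalars R)
  map_id M := by
    apply ModuleCat.hom_ext
    refine LinearMap.ext fun x => ?_
    show AdicCompletion.map I (LinearMap.id) x = x
    rw [AdicCompletion.map_id]
    rfl
  map_comp {M N P} f g := by
    apply ModuleCat.hom_ext
    refine LinearMap.ext fun x => ?_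
    show AdicCompletion.map I (g.hom ∘ₗ f.hom) x = _
    rw [← AdicCompletion.map_comp]
    rfl

instance (R : Type u) [CommRing R] (I : Ideal R) :
    (adicCompletionFunctor R I).Additive where
  map_add := by
    intro M N f g
    apply ModuleCat.hom_ext
    refine LinearMap.ext fun x => AdicCompletion.ext fun n => ?_
    show (f.hom + g.hom).reduceModIdeal (I ^ n) (x.val n) = _
    rw [reduceModIdeal_add]
    rfl

/-!
`L_iΛ^a(M)` is the homology of `Λ^a(P)` for a projective resolution `P → M`. A cycle of
`Λ^a(P)` is a Cauchy sequence of elements that are cycles modulo growing powers of `a`; it is a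
boundary as soon as the pro-systems `t ↦ H_j(P / a^t P)` vanish for `j = i, i + 1` (Mittag-Leffler).
That pro-vanishing holds for `j > n` by induction on the number of generators: for
`a = (x) + J`, Artin–Rees in `R / (0 :_R x^∞)`, where `x` is regular, gives
`(J^(m + p c) : x^p) ⊆ (J^m : x^k)` with `c`, `k` independent of `m`, `p`, and this bounds the
homology for `a` in degree `j + 1` by that for `J` in degrees `j` and `j + 1`.
-/

universe v

open Filter

section Colon

variable {R : Type u} [CommRing R] [IsNoetherianRing R]

theorem exists_mem_pow_of_mul_mem_pow (J : Ideal R) {x : R} (hx : IsLeftRegular x) :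
    ∃ c, ∀ n a, x * a ∈ J ^ (n + c) → a ∈ J ^ n := by
  obtain ⟨c, hc⟩ := Ideal.exists_pow_inf_eq_pow_smul J (Ideal.span {x})
  refine ⟨c, fun n a ha => ?_⟩
  have hxa : x * a ∈ J ^ (n + c) • ⊤ ⊓ Ideal.span {x} :=
    ⟨by simpa using ha, Ideal.mem_span_singleton'.2 ⟨a, mul_comm a x⟩⟩
  rw [hc _ (Nat.le_add_left c n), Nat.add_sub_cancel] at hxa
  have hxa' : x * a ∈ Ideal.span {x} * J ^ n := by
    rw [mul_comm, ← smul_eq_mul]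
    exact Submodule.smul_mono le_rfl inf_le_right hxa
  obtain ⟨b, hb, hxb⟩ := Ideal.mem_span_singleton_mul.1 hxa'
  exact hx hxb ▸ hb

theorem exists_mem_pow_of_pow_mul_mem_pow (J : Ideal R) {x : R} (hx : IsLeftRegular x) :
    ∃ c, ∀ m p a, x ^ p * a ∈ J ^ (m + p * c) → a ∈ J ^ m := by
  obtain ⟨c, hc⟩ := exists_mem_pow_of_mul_mem_pow J hx
  refine ⟨c, fun m p => ?_⟩
  induction p generalizing m with
  | zero => simp
  | succ p ih =>
    intro a ha
    refine hc m a (ih (m + c) (x * a) ?_)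
    rwa [← mul_assoc, ← pow_succ, show m + c + p * c = m + (p + 1) * c by ring]

/-- Pass to `R ⧸ ann(x ^ k)`, with `k` where the annihilators of the powers of `x` stabilize:
there `x` is regular. -/
theorem exists_pow_mul_mem_pow_of_pow_mul_mem_pow (J : Ideal R) (x : R) :
    ∃ c k, ∀ m p a, x ^ p * a ∈ J ^ (m + p * c) → x ^ k * a ∈ J ^ m := by
  obtain ⟨k, hk⟩ := monotone_stabilizes_iff_noetherian.mpr inferInstance
    (LinearMap.mulLeft R x).iterateKer
  let K : Ideal R := LinearMap.ker (LinearMap.mulLeft R (x ^ k))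
  have hK {m a} (hm : k ≤ m) (ha : x ^ m * a = 0) : x ^ k * a = 0 := by
    have ha' : a ∈ (LinearMap.mulLeft R x).iterateKer m := by
      simpa [LinearMap.iterateKer, LinearMap.pow_mulLeft] using ha
    rw [← hk m hm] at ha'
    simpa [LinearMap.iterateKer, LinearMap.pow_mulLeft] using ha'
  let π := Ideal.Quotient.mk K
  have hreg : IsLeftRegular (π x) := by
    refine isLeftRegular_iff_right_eq_zero_of_mul.2 fun b hb => ?_
    obtain ⟨a, rfl⟩ := Ideal.Quotient.mk_surjective b
    rw [← map_mul, Ideal.Quotient.eq_zero_iff_mem] at hb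
    refine Ideal.Quotient.eq_zero_iff_mem.2 (hK (Nat.le_succ k) ?_)
    simpa [K, pow_succ, mul_assoc] using hb
  obtain ⟨c, hc⟩ := exists_mem_pow_of_pow_mul_mem_pow (J.map π) hreg
  refine ⟨c, k, fun m p a ha => ?_⟩
  have hπa : π a ∈ (J ^ m).map π := by
    rw [Ideal.map_pow]
    refine hc m p _ ?_
    simpa [← Ideal.map_pow] using Ideal.mem_map_of_mem π ha
  obtain ⟨g, hg, hga⟩ := (Ideal.mem_map_iff_of_surjective π Ideal.Quotient.mk_surjective).1 hπa
  have hτ : x ^ k * (a - g) = 0 := by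
    have : π (a - g) = 0 := by rw [map_sub, hga, sub_self]
    simpa [K] using Ideal.Quotient.eq_zero_iff_mem.1 this
  rw [← sub_add_cancel a g, mul_add, hτ, zero_add]
  exact Ideal.mul_mem_left _ _ hg

end Colon

section Modules

variable {R : Type u} [CommRing R]

theorem Finsupp.mem_ideal_smul_top_iff_s11 {ι : Type v} (A : Ideal R) (f : ι →₀ R) :
    f ∈ A • (⊤ : Submodule R (ι →₀ R)) ↔ ∀ i, f i ∈ A := by
  refine ⟨fun hf i => ?_, fun hf => ?_⟩
  · simpa using Submodule.smul_top_le_comap_smul_top A (Finsupp.lapply i) hf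
  · rw [← f.sum_single]
    refine Submodule.finsuppSum_mem _ _ _ _ fun i _ => ?_
    simpa using
      Submodule.smul_mem_smul (hf i) (Submodule.mem_top (x := Finsupp.single i (1 : R)))

/-- A projective module is a retract of a free one, where `h` applies coordinatewise. -/
theorem smul_mem_smul_top_of_projective {P : Type v} [AddCommGroup P] [Module R P]
    [Module.Projective R P] {A B : Ideal R} {r r' : R} (h : ∀ a, r * a ∈ A → r' * a ∈ B)
    {z : P} (hz : r • z ∈ A • (⊤ : Submodule R P)) : r' • z ∈ B • (⊤ : Submodule R P) := by
  obtain ⟨s, hs⟩ := Module.projective_def'.1 ‹Module.Projective R P›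
  have hsz : r • s z ∈ A • (⊤ : Submodule R (P →₀ R)) := by
    rw [← map_smul]
    exact Submodule.smul_top_le_comap_smul_top A s hz
  have hsz' : r' • s z ∈ B • (⊤ : Submodule R (P →₀ R)) :=
    (Finsupp.mem_ideal_smul_top_iff_s11 B _).2 fun i => by
      simpa using h _ (by simpa using (Finsupp.mem_ideal_smul_top_iff_s11 A _).1 hsz i)
  simpa [← LinearMap.comp_apply, hs] using
    Submodule.smul_top_le_comap_smul_top B (Finsupp.linearCombination R id) hsz'

theorem exists_eq_pow_smul_add_of_mem_sup_pow_smul_top {M : Type v} [AddCommGroup M]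
    [Module R M] {J : Ideal R} {x : R} {p q : ℕ} {z : M}
    (hz : z ∈ (Ideal.span {x} ⊔ J) ^ (p + q) • (⊤ : Submodule R M)) :
    ∃ α β, β ∈ J ^ q • (⊤ : Submodule R M) ∧ z = x ^ p • α + β := by
  have hle : (Ideal.span {x} ⊔ J) ^ (p + q) ≤ Ideal.span {x ^ p} ⊔ J ^ q := by
    rw [← Ideal.span_singleton_pow]
    exact Ideal.sup_pow_add_le_pow_sup_pow
  obtain ⟨b, hb, β, hβ, rfl⟩ := Submodule.mem_sup.1 <| by
    simpa only [Submodule.sup_smul] using Submodule.smul_mono_left hle hz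
  rw [Submodule.ideal_span_singleton_smul, Submodule.mem_smul_pointwise_iff_exists] at hb
  obtain ⟨α, -, rfl⟩ := hb
  exact ⟨α, β, hβ, rfl⟩

end Modules

section ProZero

variable {R : Type u} [CommRing R] {Q : ℕ → Type v} [∀ j, AddCommGroup (Q j)]
  [∀ j, Module R (Q j)] (I : Ideal R) (d : ∀ j, Q (j + 1) →ₗ[R] Q j)

/-- The pro-system `t ↦ H_{i+1}(Q / I ^ t Q)` of the chain complex `⋯ → Q (j + 1) → Q j → ⋯`
is pro-zero: cycles modulo `I ^ u` are boundaries modulo `I ^ t` once `u` is large. -/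
def HomologyProZero (i : ℕ) : Prop :=
  ∀ t, ∀ᶠ u in atTop, ∀ y : Q (i + 1), d i y ∈ I ^ u • (⊤ : Submodule R (Q i)) →
    ∃ w, y - d (i + 1) w ∈ I ^ t • (⊤ : Submodule R (Q (i + 1)))

variable {I d}

theorem homologyProZero_of_forall_exists {i : ℕ}
    (h : ∀ t, ∃ u, ∀ y : Q (i + 1), d i y ∈ I ^ u • (⊤ : Submodule R (Q i)) →
      ∃ w, y - d (i + 1) w ∈ I ^ t • (⊤ : Submodule R (Q (i + 1)))) :
    HomologyProZero I d i := fun t =>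
  let ⟨u, hu⟩ := h t
  eventually_atTop.2 ⟨u, fun _ hu' y hy =>
    hu y (Submodule.smul_mono_left (Ideal.pow_le_pow_right hu') hy)⟩

theorem homologyProZero_bot {i : ℕ}
    (hex : ∀ y : Q (i + 1), d i y = 0 → ∃ w, d (i + 1) w = y) : HomologyProZero ⊥ d i :=
  homologyProZero_of_forall_exists fun _ => ⟨1, fun y hy => by
    obtain ⟨w, rfl⟩ := hex y (by simpa using hy)
    exact ⟨w, by simp⟩⟩

/-- Write `d y = x ^ (t + k) • α + β` with `β` deep in the `J`-adic filtration. Then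
`x ^ (t + k) • d α` is deep as well, so by Artin–Rees `x ^ k • d α` is, and the homology
for `J` in degrees `i` and `i + 1` lets us correct `y` first by `x ^ t • v`, then by a boundary. -/
theorem HomologyProZero.sup_span_singleton [IsNoetherianRing R] {J : Ideal R} {i : ℕ}
    [Module.Projective R (Q i)] (hdd : ∀ y, d i (d (i + 1) y) = 0)
    (h₀ : HomologyProZero J d i) (h₁ : HomologyProZero J d (i + 1)) (x : R) :
    HomologyProZero (Ideal.span {x} ⊔ J) d (i + 1) := by
  obtain ⟨c, k, hcolon⟩ := exists_pow_mul_mem_pow_of_pow_mul_mem_pow J x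
  refine homologyProZero_of_forall_exists fun t => ?_
  obtain ⟨u₁, hu₁⟩ := (h₁ t).exists
  obtain ⟨u₀, hu₀, hu₁₀⟩ := ((h₀ u₁).and (eventually_ge_atTop u₁)).exists
  refine ⟨t + k + (u₀ + (t + k) * c), fun y hy => ?_⟩
  obtain ⟨α, β, hβ, hdy⟩ := exists_eq_pow_smul_add_of_mem_sup_pow_smul_top hy
  have hdβ := Submodule.smul_top_le_comap_smul_top _ (d i) hβ
  have hdα : d i (x ^ k • α) ∈ J ^ u₀ • (⊤ : Submodule R (Q i)) := by
    rw [map_smul]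
    refine smul_mem_smul_top_of_projective (hcolon u₀ (t + k)) ?_
    have h0 := hdd y
    rw [hdy, map_add, map_smul] at h0
    rw [eq_neg_of_add_eq_zero_left h0]
    exact neg_mem hdβ
  obtain ⟨v, hv⟩ := hu₀ _ hdα
  obtain ⟨w, hw⟩ := hu₁ (y - x ^ t • v) <| by
    have hsplit : d (i + 1) (y - x ^ t • v) = x ^ t • (x ^ k • α - d (i + 1) v) + β := by
      rw [map_sub, hdy, map_smul, smul_sub, smul_smul, ← pow_add]
      abel
    rw [hsplit]
    exact add_mem (Submodule.smul_mem _ _ hv)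
      (Submodule.smul_mono_left (Ideal.pow_le_pow_right (by omega)) hβ)
  refine ⟨w, ?_⟩
  rw [← sub_add_cancel (y - _) (x ^ t • v), sub_right_comm]
  refine add_mem (Submodule.smul_mono_left (Ideal.pow_right_mono le_sup_right t) hw)
    (Submodule.smul_mem_smul ?_ Submodule.mem_top)
  exact Ideal.pow_mem_pow (Ideal.mem_sup_left (Ideal.mem_span_singleton_self x)) t

theorem homologyProZero_span_of_card_le [IsNoetherianRing R] [∀ j, Module.Projective R (Q j)]
    (hdd : ∀ j y, d j (d (j + 1) y) = 0)
    (hex : ∀ j (y : Q (j + 1)), d j y = 0 → ∃ w, d (j + 1) w = y)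
    (s : Finset R) {i : ℕ} (hi : s.card ≤ i) : HomologyProZero (Ideal.span s) d i := by
  classical
  induction s using Finset.induction_on generalizing i with
  | empty => simpa using homologyProZero_bot (hex i)
  | @insert x s hx ih =>
    rw [Finset.card_insert_of_notMem hx] at hi
    obtain ⟨i, rfl⟩ : ∃ i', i = i' + 1 := ⟨i - 1, by omega⟩
    rw [Finset.coe_insert, Ideal.span_insert]
    exact (ih (by omega)).sup_span_singleton (hdd i) (ih (by omega)) x

end ProZero

theorem AdicCompletion.exists_adicCauchySequence_forall_mem {R : Type u} [CommRing R]
    {M : Type v} [AddCommGroup M] [Module R M] (I : Ideal R) {E : ℕ → Set M}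
    (h₀ : (E 0).Nonempty)
    (hstep : ∀ j, ∀ w ∈ E j, ∃ w' ∈ E (j + 1), w ≡ w' [SMOD (I ^ j • ⊤ : Submodule R M)]) :
    ∃ W : AdicCauchySequence I M, ∀ j, W j ∈ E j := by
  choose! f hfE hf using hstep
  obtain ⟨w₀, hw₀⟩ := h₀
  let W : ℕ → M := fun j => Nat.rec w₀ f j
  have hW : ∀ j, W j ∈ E j := by
    intro j
    induction j with
    | zero => exact hw₀
    | succ j ih => exact hfE j _ ih
  exact ⟨.mk I M W fun j => hf j _ (hW j), hW⟩

section Completion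

variable {R : Type u} [CommRing R] {Q : ℕ → Type v} [∀ j, AddCommGroup (Q j)]
  [∀ j, Module R (Q j)] {I : Ideal R} {d : ∀ j, Q (j + 1) →ₗ[R] Q j}

/-- A Mittag-Leffler argument: approximate preimages of a Cauchy sequence exist to every
order, and pro-vanishing of the next homology lets them be chosen compatibly. -/
theorem exists_map_eq_of_homologyProZero {i : ℕ} (hdd : ∀ y, d (i + 1) (d (i + 2) y) = 0)
    (h₀ : HomologyProZero I d i) (h₁ : HomologyProZero I d (i + 1))
    {z : AdicCompletion I (Q (i + 1))} (hz : AdicCompletion.map I (d i) z = 0) :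
    ∃ w, AdicCompletion.map I (d (i + 1)) w = z := by
  obtain ⟨a, rfl⟩ := AdicCompletion.mk_surjective I _ z
  have ha : ∀ t, d i (a t) ∈ I ^ t • (⊤ : Submodule R (Q i)) := fun t => by
    simpa [AdicCompletion.map_mk, Submodule.Quotient.mk_eq_zero] using congr_arg (·.val t) hz
  have hcauchy : ∀ {t u}, t ≤ u → a t - a u ∈ I ^ t • (⊤ : Submodule R (Q (i + 1))) :=
    fun htu => SModEq.sub_mem.1 (a.property htu)
  let E : ℕ → Set (Q (i + 2)) := fun t =>
    {w | a t - d (i + 1) w ∈ I ^ t • (⊤ : Submodule R (Q (i + 1)))}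
  have hE_anti : ∀ {t u}, t ≤ u → E u ⊆ E t := fun htu w hw => by
    simpa [E] using
      add_mem (hcauchy htu) (Submodule.smul_mono_left (Ideal.pow_le_pow_right htu) hw)
  have hE : ∀ t, (E t).Nonempty := fun t => by
    obtain ⟨u, hu, htu⟩ := ((h₀ t).and (eventually_ge_atTop t)).exists
    obtain ⟨w, hw⟩ := hu (a u) (ha u)
    exact ⟨w, by simpa [E] using add_mem (hcauchy htu) hw⟩
  obtain ⟨σ, hσ, hσ₁⟩ := extraction_forall_of_eventually h₁
  obtain ⟨W, hW⟩ := AdicCompletion.exists_adicCauchySequence_forall_mem I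
      (E := fun j => E (σ j)) (hE _) fun j w hw => by
    obtain ⟨w', hw'⟩ := hE (σ (j + 1))
    have hw₁ : a (σ j) - d (i + 1) w ∈ I ^ σ j • (⊤ : Submodule R (Q (i + 1))) := hw
    have hw₂ : a (σ j) - d (i + 1) w' ∈ I ^ σ j • (⊤ : Submodule R (Q (i + 1))) :=
      hE_anti (hσ j.lt_succ_self).le hw'
    obtain ⟨h, hh⟩ := hσ₁ j (w' - w) (by simpa [map_sub] using sub_mem hw₁ hw₂)
    refine ⟨w' - d (i + 2) h, by simpa [E, hdd] using hw', ?_⟩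
    rw [SModEq.comm, SModEq.sub_mem, sub_right_comm]
    exact hh
  refine ⟨AdicCompletion.mk I _ W, AdicCompletion.ext fun t => ?_⟩
  have hWt : a t - d (i + 1) (W t) ∈ I ^ t • (⊤ : Submodule R (Q (i + 1))) :=
    hE_anti (hσ.id_le t) (hW t)
  simpa [AdicCompletion.map_mk, Submodule.Quotient.eq] using neg_mem hWt

end Completion

/-- If `a` is an ideal of a commutative noetherian ring `R` generated by
`n` elements, then for every `R`-module `M` and every `i > n`, the `i`-th left derived
local homology module `H_i(LΛ^a(M)) = L_iΛ^a(M)` vanishes. -/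
theorem leftDerived_adicCompletion_vanishes
    {R : Type u} [CommRing R] [IsNoetherianRing R] (I : Ideal R)
    (n : ℕ) (s : Finset R) (hcard : s.card = n) (hspan : Ideal.span (s : Set R) = I)
    (M : ModuleCat.{u} R) (i : ℕ) (hi : n < i) :
    Limits.IsZero (((adicCompletionFunctor R I).leftDerived i).obj M) := by
  obtain ⟨i, rfl⟩ : ∃ j, i = j + 1 := ⟨i - 1, by omega⟩
  let P : ProjectiveResolution M := (HasProjectiveResolution.out (Z := M)).some
  let Q : ℕ → Type u := fun j => P.complex.X j
  let d : ∀ j, Q (j + 1) →ₗ[R] Q j := fun j => (P.complex.d (j + 1) j).hom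
  have hdd : ∀ j y, d j (d (j + 1) y) = 0 := fun j y =>
    congr_arg (fun f => f.hom y) (P.complex.d_comp_d (j + 2) (j + 1) j)
  have hex : ∀ j (y : Q (j + 1)), d j y = 0 → ∃ w, d (j + 1) w = y := fun j => by
    have h := P.complex_exactAt_succ j
    rw [HomologicalComplex.exactAt_iff' _ (j + 2) (j + 1) j (by simp) (by simp)] at h
    exact (ShortComplex.moduleCat_exact_iff _).1 h
  have hproj : ∀ j, Module.Projective R (Q j) := fun j =>
    ModuleCat.projective_of_module_projective _
  have hproZero : ∀ j, n ≤ j → HomologyProZero I d j := fun j hj => by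
    simpa [hspan] using homologyProZero_span_of_card_le hdd hex s (hj.trans' hcard.le)
  refine .of_iso ((HomologicalComplex.exactAt_iff_isZero_homology _ _).1 ?_)
    (P.isoLeftDerivedObj (adicCompletionFunctor R I) (i + 1))
  rw [HomologicalComplex.exactAt_iff' _ (i + 2) (i + 1) i (by simp) (by simp),
    ShortComplex.moduleCat_exact_iff]
  exact fun z hz => exists_map_eq_of_homologyProZero (hdd (i + 1))
    (hproZero i (by omega)) (hproZero (i + 1) (by omega)) hz
end

section
/- Let R be a commutative noetherian ring and a an ideal. If G is an exact (acyclic) complex of flat R-modules, then the termwise a-adic completion Λ^a(G) is also exact. -/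
open CategoryTheory

/-! Completing termwise preserves exactness of `M → N → P` as soon as the images of both maps
carry the subspace topology equal to their own `I`-adic topology, i.e. satisfy
`I ^ m N ∩ range f ⊆ I ^ n • range f` for `m ≫ n`: a kernel element of the completion is then
approximated by cycles, hence by boundaries, and these lift to a Cauchy sequence upstairs.

For the boundaries of an exact complex of flat modules this Artin–Rees property is proved by
induction on a finite set of generators of `I`. To pass from `A` to `(b) + A`, decompose an element
of `(b ^ m, A ^ m) N ∩ range f` as `b ^ m h + y` and use the hypothesis one step further down the
complex to turn `b ^ (m - n) h` into a boundary modulo `A`-powers. The division by powers of `b`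
this needs is, by flatness, the ring-level statement `b ^ m r ∈ A ^ m → b ^ (m - n) r ∈ A ^ N`,
which follows from the Artin–Rees lemma after killing the (bounded) `b`-power torsion of `R`. -/

open Filter LinearMap

section NoetherianRing

variable {R : Type*} [CommRing R] [IsNoetherianRing R]

theorem exists_pow_mul_eq_zero_of_pow_add_mul_eq_zero (b : R) :
    ∃ t, ∀ s (r : R), b ^ (t + s) * r = 0 → b ^ t * r = 0 := by
  obtain ⟨t, ht⟩ := (eventually_iSup_ker_pow_eq (mulLeft R b)).exists
  refine ⟨t, fun s r hr => ?_⟩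
  have hr' : r ∈ ker (mulLeft R b ^ (t + s)) := by simpa [pow_mulLeft] using hr
  have hr'' := Submodule.mem_iSup_of_mem (p := fun m => ker (mulLeft R b ^ m)) (t + s) hr'
  rw [ht] at hr''
  simpa [pow_mulLeft] using hr''

theorem IsSMulRegular.exists_mem_pow_smul_top_of_pow_smul_mem {M : Type*} [AddCommGroup M]
    [Module R M] [Module.Finite R M] (A : Ideal R) {b : R} (hb : IsSMulRegular M b) :
    ∃ k, ∀ j s (x : M), b ^ j • x ∈ A ^ s • (⊤ : Submodule R M) →
      x ∈ A ^ (s - j * k) • (⊤ : Submodule R M) := by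
  obtain ⟨k, hk⟩ := Ideal.exists_pow_inf_eq_pow_smul A (range (lsmul R M b))
  have hstep (s : ℕ) (x : M) (hx : b • x ∈ A ^ s • (⊤ : Submodule R M)) :
      x ∈ A ^ (s - k) • (⊤ : Submodule R M) := by
    rcases lt_or_ge s k with hs | hs
    · simp [Nat.sub_eq_zero_of_le hs.le]
    have hbx : b • x ∈ A ^ s • ⊤ ⊓ range (lsmul R M b) := ⟨hx, x, rfl⟩
    rw [hk s hs] at hbx
    replace hbx := Submodule.smul_mono le_rfl inf_le_right hbx
    rw [range_eq_map, ← Submodule.map_smul''] at hbx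
    obtain ⟨y, hy, hyx⟩ := hbx
    rwa [← hb hyx]
  refine ⟨k, fun j => ?_⟩
  induction j with
  | zero => simp
  | succ j ih =>
    intro s x hx
    rw [pow_succ, mul_smul] at hx
    have hx' := hstep _ x (ih s _ hx)
    rwa [Nat.sub_sub, ← Nat.succ_mul] at hx'

theorem eventually_pow_sub_mul_mem_pow (b : R) (A : Ideal R) (N n : ℕ) :
    ∀ᶠ m in atTop, ∀ r : R, b ^ m * r ∈ A ^ m → b ^ (m - n) * r ∈ A ^ N := by
  obtain ⟨t, ht⟩ := exists_pow_mul_eq_zero_of_pow_add_mul_eq_zero b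
  -- `b` is regular modulo the `b ^ t`-torsion `K`, and `b ^ t` kills `K` again at the end.
  set K : Ideal R := ker (mulLeft R (b ^ t))
  have hK (r : R) : r ∈ K ↔ b ^ t * r = 0 := Iff.rfl
  have hreg : IsSMulRegular (R ⧸ K) b := by
    refine isSMulRegular_iff_right_eq_zero_of_smul.mpr fun x hx => ?_
    obtain ⟨r, rfl⟩ := K.mkQ_surjective x
    rw [← map_smul, Submodule.mkQ_apply, Submodule.Quotient.mk_eq_zero, hK] at hx
    rw [Submodule.mkQ_apply, Submodule.Quotient.mk_eq_zero, hK]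
    exact ht 1 r (by simpa [pow_succ, mul_assoc] using hx)
  obtain ⟨k, hk⟩ := hreg.exists_mem_pow_smul_top_of_pow_smul_mem A
  have hmap (J : Ideal R) : Submodule.map K.mkQ J = J • (⊤ : Submodule R (R ⧸ K)) := by
    rw [← Submodule.range_mkQ K, ← Submodule.map_top, ← Submodule.map_smul'', Ideal.smul_eq_mul,
      Ideal.mul_top]
  refine eventually_atTop.mpr ⟨n + t + N + (n + t) * k, fun m hm r hr => ?_⟩
  have hq : b ^ (n + t) • K.mkQ (b ^ (m - (n + t)) * r) = K.mkQ (b ^ m * r) := by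
    rw [← map_smul, smul_eq_mul, ← mul_assoc, ← pow_add, Nat.add_sub_cancel' (by omega)]
  have hbr : K.mkQ (b ^ m * r) ∈ A ^ m • ⊤ := hmap _ ▸ Submodule.mem_map_of_mem hr
  obtain ⟨a, ha, hae⟩ : K.mkQ (b ^ (m - (n + t)) * r) ∈ Submodule.map K.mkQ (A ^ _) :=
    hmap _ ▸ hk (n + t) m _ (hq ▸ hbr)
  rw [Submodule.mkQ_apply, Submodule.mkQ_apply, Submodule.Quotient.eq, hK, mul_sub,
    sub_eq_zero] at hae
  have hsplit : b ^ (m - n) * r = b ^ t * (b ^ (m - (n + t)) * r) := by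
    rw [← mul_assoc, ← pow_add]
    congr 2
    omega
  rw [hsplit, ← hae]
  exact Ideal.mul_mem_left _ _ (Ideal.pow_le_pow_right (by omega) ha)

end NoetherianRing

theorem Module.Flat.smul_mem_smul_top_of_mul_mem {R M : Type*} [CommRing R] [AddCommGroup M]
    [Module R M] [Module.Flat R M] {c d : R} {C D : Ideal R} (h : ∀ r, c * r ∈ C → d * r ∈ D)
    {x : M} (hx : c • x ∈ C • (⊤ : Submodule R M)) : d • x ∈ D • (⊤ : Submodule R M) := by
  classical
  rw [← Submodule.span_univ, ← Set.range_id,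
    Submodule.mem_ideal_smul_span_iff_exists_sum] at hx
  obtain ⟨a, ha, hsum⟩ := hx
  -- Equational criterion for the relation `c • x - ∑ aₘ • m = 0`.
  let f : Option a.support → R := fun i => i.elim c fun m => -a m
  let z : Option a.support → M := fun i => i.elim x fun m => m
  have hrel : ∑ i, f i • z i = 0 := by
    rw [Fintype.sum_option, add_eq_zero_iff_eq_neg]
    simp [f, z, ← hsum, Finsupp.sum, ← Finset.sum_coe_sort a.support]
  obtain ⟨k, e, y, hzy, he⟩ := Module.Flat.isTrivialRelation_of_sum_smul_eq_zero hrel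
  rw [show x = z none from rfl, hzy, Finset.smul_sum]
  refine Submodule.sum_mem _ fun j _ => ?_
  rw [smul_smul]
  refine Submodule.smul_mem_smul (h _ ?_) Submodule.mem_top
  have hj := he j
  rw [Fintype.sum_option, add_eq_zero_iff_eq_neg, ← Finset.sum_neg_distrib] at hj
  rw [show c = f none from rfl, hj]
  exact C.sum_mem fun m _ => by simpa [f] using C.mul_mem_right _ (ha m)

section ArtinRees

variable {R : Type*} [CommRing R] {N : Type*} [AddCommGroup N] [Module R N]

/-- The `I`-adic topology of `N` induces the `I`-adic topology of `B`. -/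
def Submodule.IsArtinRees (B : Submodule R N) (I : Ideal R) : Prop :=
  ∀ n, ∃ m, I ^ m • (⊤ : Submodule R N) ⊓ B ≤ I ^ n • B

theorem Submodule.isArtinRees_bot (B : Submodule R N) : B.IsArtinRees ⊥ :=
  fun _ => ⟨1, by simp⟩

theorem Submodule.IsArtinRees.eventually {B : Submodule R N} {I : Ideal R}
    (hB : B.IsArtinRees I) (n : ℕ) :
    ∀ᶠ m in atTop, I ^ m • (⊤ : Submodule R N) ⊓ B ≤ I ^ n • B := by
  obtain ⟨m, hm⟩ := hB n
  exact eventually_atTop.mpr ⟨m, fun k hk =>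
    le_trans (inf_le_inf_right _ (smul_mono_left (Ideal.pow_le_pow_right hk))) hm⟩

end ArtinRees

namespace AdicCompletion

variable {R : Type*} [CommRing R] {I : Ideal R} {M N P : Type*} [AddCommGroup M] [Module R M]
  [AddCommGroup N] [Module R N] [AddCommGroup P] [Module R P]

theorem exists_mem_ker_sub_mem {g : N →ₗ[R] P} (hg : (range g).IsArtinRees I)
    (b : AdicCauchySequence I N) (hb : ∀ n, g (b n) ∈ I ^ n • (⊤ : Submodule R P)) (n : ℕ) :
    ∃ x ∈ ker g, x - b n ∈ I ^ n • (⊤ : Submodule R N) := by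
  obtain ⟨m, hm, hnm⟩ := ((hg.eventually n).and (eventually_ge_atTop n)).exists
  have hbm : g (b m) ∈ Submodule.map g (I ^ n • ⊤) := by
    rw [Submodule.map_smul'', Submodule.map_top]
    exact hm ⟨hb m, _, rfl⟩
  obtain ⟨c, hc, hgc⟩ := hbm
  refine ⟨b m - c, by simp [hgc], ?_⟩
  rw [sub_right_comm]
  exact Submodule.sub_mem _ (SModEq.sub_mem.mp (b.prop hnm).symm) hc

theorem mk_mem_range_map_subtype {B : Submodule R N} (hB : B.IsArtinRees I)
    (b : AdicCauchySequence I N) (hb : ∀ n, ∃ x ∈ B, x - b n ∈ I ^ n • (⊤ : Submodule R N)) :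
    mk I N b ∈ range (map I B.subtype) := by
  choose x hxB hxb using hb
  have hx {p q : ℕ} (hpq : p ≤ q) : x p - x q ∈ I ^ p • (⊤ : Submodule R N) := by
    have hq := Submodule.smul_mono_left (Ideal.pow_le_pow_right hpq) (hxb q)
    convert Submodule.add_mem _ (Submodule.sub_mem _ (hxb p) hq)
      (SModEq.sub_mem.mp (b.prop hpq)) using 1
    abel
  obtain ⟨φ, hφ, hφB⟩ := extraction_forall_of_eventually hB.eventually
  let y : AdicCauchySequence I B := AdicCauchySequence.mk I B (fun n => ⟨x (φ n), hxB _⟩)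
    fun n => by
      rw [SModEq.sub_mem, Submodule.mem_smul_top_iff]
      exact hφB n ⟨hx (hφ n.lt_succ_self).le, Submodule.sub_mem _ (hxB _) (hxB _)⟩
  refine ⟨mk I B y, AdicCompletion.ext fun n => ?_⟩
  rw [map_mk]
  show Submodule.Quotient.mk (x (φ n)) = Submodule.Quotient.mk (b n)
  rw [Submodule.Quotient.eq]
  have hφn : n ≤ φ n := hφ.id_le n
  convert Submodule.add_mem _ (Submodule.smul_mono_left (Ideal.pow_le_pow_right hφn) (hxb (φ n)))
    (SModEq.sub_mem.mp (b.prop hφn).symm) using 1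
  abel

theorem map_exact_of_isArtinRees {f : M →ₗ[R] N} {g : N →ₗ[R] P} (hfg : Function.Exact f g)
    (hf : (range f).IsArtinRees I) (hg : (range g).IsArtinRees I) :
    Function.Exact (map I f) (map I g) := by
  refine exact_of_comp_eq_zero_of_ker_le_range ?_ fun y hy => ?_
  · rw [map_comp, hfg.linearMap_comp_eq_zero, map_zero]
  induction y using AdicCompletion.induction_on with | h b => ?_
  have hb (n : ℕ) : g (b n) ∈ I ^ n • (⊤ : Submodule R P) := by
    simpa using congrArg (fun x => x.val n) hy
  obtain ⟨z, hz⟩ := mk_mem_range_map_subtype hf b fun n => by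
    simpa only [hfg.linearMap_ker_eq] using exists_mem_ker_sub_mem hg b hb n
  obtain ⟨a, rfl⟩ := map_surjective I f.surjective_rangeRestrict z
  exact ⟨a, by rw [← hz, ← LinearMap.comp_apply, map_comp, LinearMap.subtype_comp_codRestrict]⟩

end AdicCompletion

section ArtinReesStep

variable {R : Type*} [CommRing R] [IsNoetherianRing R]
  {M N P : Type*} [AddCommGroup M] [Module R M] [AddCommGroup N] [Module R N]
  [AddCommGroup P] [Module R P] [Module.Flat R P]
  {f : M →ₗ[R] N} {g : N →ₗ[R] P} {A : Ideal R}

theorem exists_sup_smul_top_inf_range_le (hfg : Function.Exact f g) (hf : (range f).IsArtinRees A)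
    (hg : (range g).IsArtinRees A) (b : R) (n : ℕ) :
    ∃ m, (Ideal.span {b ^ m} ⊔ A ^ m) • (⊤ : Submodule R N) ⊓ range f ≤
      (Ideal.span {b ^ n} ⊔ A ^ n) • range f := by
  obtain ⟨m₂, hm₂⟩ := hf n
  obtain ⟨m₁, hm₁⟩ := hg m₂
  obtain ⟨m, ⟨hdiv, hnm⟩, hm₂m⟩ := ((eventually_pow_sub_mul_mem_pow b A m₁ n).and
    (eventually_ge_atTop n)).and (eventually_ge_atTop m₂) |>.exists
  refine ⟨m, ?_⟩
  -- Write `f u = b ^ m • h + y`. Flatness of `P` divides `b ^ m • g h ∈ A ^ m P` by `b ^ n`,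
  -- so `b ^ (m - n) • h = f v + w` with `w ∈ A ^ m₂ N`, and `f u - b ^ n • f v = y + b ^ n • w`.
  rintro _ ⟨hx, u, rfl⟩
  rw [SetLike.mem_coe, Submodule.sup_smul, Submodule.ideal_span_singleton_smul,
    Submodule.mem_sup] at hx
  obtain ⟨_, ⟨h, -, rfl⟩, y, hy, hfu⟩ := hx
  replace hfu : b ^ m • h + y = f u := hfu
  have hgh : b ^ m • g h ∈ A ^ m • (⊤ : Submodule R P) := by
    have hgfu : g (b ^ m • h + y) = 0 := by rw [hfu]; exact hfg.apply_apply_eq_zero u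
    rw [map_add, map_smul, add_eq_zero_iff_eq_neg] at hgfu
    rw [hgfu]
    exact neg_mem (Submodule.smul_top_le_comap_smul_top _ g hy)
  have hgh' := Module.Flat.smul_mem_smul_top_of_mul_mem hdiv hgh
  obtain ⟨w, hw, hgw⟩ : g (b ^ (m - n) • h) ∈ Submodule.map g (A ^ m₂ • ⊤) := by
    rw [Submodule.map_smul'', Submodule.map_top]
    exact hm₁ ⟨by rwa [map_smul], _, rfl⟩
  obtain ⟨v, hv⟩ : b ^ (m - n) • h - w ∈ range f := by
    rw [← hfg.linearMap_ker_eq, LinearMap.mem_ker, map_sub, hgw, sub_self]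
  have hfv : b ^ n • f v = b ^ m • h - b ^ n • w := by
    rw [hv, smul_sub, smul_smul, ← pow_add, Nat.add_sub_cancel' hnm]
  have hrest : f (u - b ^ n • v) ∈ A ^ n • range f := by
    refine hm₂ ⟨?_, mem_range_self f _⟩
    rw [map_sub, map_smul, hfv, ← hfu, add_sub_sub_cancel]
    exact add_mem (Submodule.smul_mono_left (Ideal.pow_le_pow_right hm₂m) hy)
      (Submodule.smul_mem _ _ hw)
  rw [show u = b ^ n • v + (u - b ^ n • v) by abel, map_add, map_smul, Submodule.sup_smul]
  exact Submodule.add_mem_sup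
    (Submodule.smul_mem_smul (Ideal.mem_span_singleton_self _) (mem_range_self f v)) hrest

theorem isArtinRees_range_span_singleton_sup (hfg : Function.Exact f g)
    (hf : (range f).IsArtinRees A) (hg : (range g).IsArtinRees A) (b : R) :
    (range f).IsArtinRees (Ideal.span {b} ⊔ A) := by
  intro n
  obtain ⟨m, hm⟩ := exists_sup_smul_top_inf_range_le hfg hf hg b n
  refine ⟨m + m, le_trans ?_ (hm.trans ?_)⟩
  · refine inf_le_inf_right _ (Submodule.smul_mono_left ?_)
    exact Ideal.sup_pow_add_le_pow_sup_pow.trans (by rw [Ideal.span_singleton_pow])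
  · refine Submodule.smul_mono_left (sup_le ?_ (Ideal.pow_right_mono le_sup_right n))
    exact Ideal.span_singleton_pow b n ▸ Ideal.pow_right_mono le_sup_left n

end ArtinReesStep

universe u v

open CategoryTheory.Limits

theorem ChainComplex.isZero_homology_iff_exact {R : Type u} [Ring R]
    (K : ChainComplex (ModuleCat.{v} R) ℤ) {i j k : ℤ} (hij : j + 1 = i) (hjk : k + 1 = j) :
    IsZero (K.homology j) ↔ Function.Exact (K.d i j).hom (K.d j k).hom := by
  rw [← K.exactAt_iff_isZero_homology, K.exactAt_iff' i j k
    ((ComplexShape.down ℤ).prev_eq' hij) ((ComplexShape.down ℤ).next_eq' hjk)]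
  exact ShortComplex.ShortExact.moduleCat_exact_iff_function_exact _

theorem ChainComplex.isArtinRees_range_d {R : Type u} [CommRing R] [IsNoetherianRing R]
    (G : ChainComplex (ModuleCat.{v} R) ℤ) (hflat : ∀ i, Module.Flat R (G.X i))
    (hexact : ∀ {i j k : ℤ}, j + 1 = i → k + 1 = j → Function.Exact (G.d i j).hom (G.d j k).hom)
    (A : Ideal R) {i j : ℤ} (hij : j + 1 = i) : (range (G.d i j).hom).IsArtinRees A := by
  obtain ⟨s, rfl⟩ := IsNoetherian.noetherian A
  classical
  induction s using Finset.induction_on generalizing i j with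
  | empty => simpa using Submodule.isArtinRees_bot _
  | insert b s _ ih =>
    rw [Finset.coe_insert, Submodule.span_insert]
    have := hflat (j - 1)
    exact isArtinRees_range_span_singleton_sup (hexact (k := j - 1) hij (by omega))
      (ih hij) (ih (i := j) (by omega)) b

/-- If `G` is an exact complex of flat modules over a commutative
noetherian ring `R` and `a` is an ideal of `R`, then the termwise `a`-adic completion
`Λ^a(G)` is also exact. -/
theorem adicCompletion_of_exact_flat_complex_exact
    {R : Type u} [CommRing R] [IsNoetherianRing R] (I : Ideal R)
    (G : ChainComplex (ModuleCat.{u} R) ℤ)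
    (hflat : ∀ i, Module.Flat R (G.X i))
    (hexact : ∀ i, CategoryTheory.Limits.IsZero (G.homology i)) :
    ∀ i, CategoryTheory.Limits.IsZero
      ((((adicCompletionFunctor R I).mapHomologicalComplex
          (ComplexShape.down ℤ)).obj G).homology i) := by
  have hG {i j k : ℤ} (hij : j + 1 = i) (hjk : k + 1 = j) :
      Function.Exact (G.d i j).hom (G.d j k).hom :=
    (G.isZero_homology_iff_exact hij hjk).mp (hexact j)
  intro j
  rw [ChainComplex.isZero_homology_iff_exact _ (i := j + 1) (k := j - 1) rfl (by omega)]
  exact AdicCompletion.map_exact_of_isArtinRees (hG rfl (by omega))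
    (G.isArtinRees_range_d hflat hG I rfl) (G.isArtinRees_range_d hflat hG I (by omega))
end
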